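/- Let A be a basis of a matroid M on a linearly ordered set E, let a ∈ IP(A), and let d be the maximum element of E such that D := (A \ {a}) ∪ {d} is a basis with d ≠ a. Then D <_{ext/int} A and IA(A) ⊆ IA(D). -/

import Mathlib

open Set

variable {α : Type*}

/-- A circuit of a matroid: a minimal dependent set. -/
def Matroid.Cct (M : Matroid α) (C : Set α) : Prop :=
  M.Dep C ∧ ∀ D ⊂ C, ¬ M.Dep D

/-- The externally active elements with respect to `S`: elements `e ∈ E \ S` that are the
maximum of some circuit contained in `S ∪ {e}`. -/
def Matroid.exA [LinearOrder α] (M : Matroid α) (S : Set α) : Set α :=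
  {e | e ∈ M.E \ S ∧ ∃ C, M.Cct C ∧ C ⊆ insert e S ∧ ∀ f ∈ C, f ≤ e}

/-- The externally passive elements with respect to `S`. -/
def Matroid.exP [LinearOrder α] (M : Matroid α) (S : Set α) : Set α :=
  (M.E \ S) \ M.exA S

/-- The internally active elements with respect to `S`: elements of `S` that are externally
active with respect to `E \ S` in the dual matroid. -/
def Matroid.inA [LinearOrder α] (M : Matroid α) (S : Set α) : Set α :=
  {i | i ∈ S ∧ i ∈ M✶.exA (M.E \ S)}

/-- The internally passive elements with respect to `S`. -/
def Matroid.inP [LinearOrder α] (M : Matroid α) (S : Set α) : Set α :=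
  S \ M.inA S

/-- `I` is internally related to the basis `B` if `I = B \ Y` for some `Y ⊆ IA(B)`. -/
def Matroid.IntRelated [LinearOrder α] (M : Matroid α) (I B : Set α) : Prop :=
  M.IsBase B ∧ ∃ Y ⊆ M.inA B, I = B \ Y

/-- The external/internal order on independent sets. -/
def Matroid.extIntLE [LinearOrder α] (M : Matroid α) (I J : Set α) : Prop :=
  ((∃ B, M.IntRelated I B ∧ M.IntRelated J B) ∧ I ⊆ J) ∨
  ((¬ ∃ B, M.IntRelated I B ∧ M.IntRelated J B) ∧
    (I \ M.inA I) ∪ M.exA I ⊆ (J \ M.inA J) ∪ M.exA J)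

/-!
The fundamental cocircuit `K` of `a` in `A` consists of `a` and the elements `f` for which
`A - a + f` is a base, so `d = max K`, and `a < d` because `a` is internally passive. As `K` is
also the fundamental cocircuit of `d` in `D`, `d` is internally active in `D`, and eliminating
`d` between `K` and the fundamental cocircuit of an internally active `i ∈ A` shows that `i`
stays active in `D`. Dually, an element externally active for `D` whose fundamental circuit
contains `d` would exceed `d` and could replace it, against the maximality of `d`; hence
`EA(D) ⊆ EA(A) ∪ {a}`, which gives `D <_{ext/int} A` since `D` and `A` are distinct bases.
-/

lemma Set.sdiff_insert_sdiff_singleton {E A : Set α} {a d : α} (haE : a ∈ E) (hda : d ≠ a) :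
    E \ insert d (A \ {a}) = insert a ((E \ A) \ {d}) := by
  ext x
  simp only [mem_sdiff, mem_insert_iff, mem_singleton_iff]
  grind

namespace Matroid

variable {M : Matroid α} {A B C S T : Set α} {a b d x y : α}

lemma cct_iff_isCircuit : M.Cct C ↔ M.IsCircuit C := by
  rw [Cct, isCircuit_iff]
  refine and_congr_right fun _ => ⟨fun h D hD hDC => ?_, fun h D hDC hD => ?_⟩
  · by_contra hne
    exact h D (hDC.ssubset_of_ne hne) hD
  · exact hDC.ne (h hD hDC.subset)

lemma IsBase.mem_fundCircuit_iff_isBase (hB : M.IsBase B) (hx : x ∈ M.E \ B) (hbx : b ≠ x) :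
    b ∈ M.fundCircuit x B ↔ M.IsBase (insert x (B \ {b})) := by
  rw [hB.indep.mem_fundCircuit_iff (by rw [hB.closure_eq]; exact hx.1) hx.2,
    ← insert_sdiff_singleton_comm hbx.symm]
  exact ⟨hB.exchange_isBase_of_indep hx.2, IsBase.indep⟩

lemma IsBase.mem_fundCocircuit_iff_isBase (hB : M.IsBase B) (hx : x ∈ M.E \ B) (hbx : b ≠ x) :
    x ∈ M.fundCocircuit b B ↔ M.IsBase (insert x (B \ {b})) := by
  rw [hB.mem_fundCocircuit_iff_mem_fundCircuit, hB.mem_fundCircuit_iff_isBase hx hbx]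

lemma IsBase.isBase_exchange_of_isCircuit (hB : M.IsBase B) (hx : x ∈ M.E \ B)
    (hC : M.IsCircuit C) (hCB : C ⊆ insert x B) (hbC : b ∈ C) (hbx : b ≠ x) :
    M.IsBase (insert x (B \ {b})) := by
  rw [← hB.mem_fundCircuit_iff_isBase hx hbx, ← hC.eq_fundCircuit_of_subset hB.indep hCB]
  exact hbC

lemma IsBase.notMem_of_isBase_exchange (hA : M.IsBase A) (hD : M.IsBase (insert d (A \ {a})))
    (ha : a ∈ A) (hda : d ≠ a) : d ∉ A := fun hdA => by
  have hDA := hD.eq_of_subset_isBase hA (insert_subset hdA sdiff_subset)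
  have haD : a ∈ insert d (A \ {a}) := by rwa [hDA]
  simp [hda.symm] at haD

section LinearOrder

variable [LinearOrder α]

lemma mem_exA_iff : x ∈ M.exA S ↔
    x ∈ M.E \ S ∧ ∃ C, M.IsCircuit C ∧ C ⊆ insert x S ∧ ∀ f ∈ C, f ≤ x := by
  simp only [exA, cct_iff_isCircuit, mem_ofPred_eq]

lemma exA_sdiff_subset (hST : S ⊆ T) : M.exA S \ T ⊆ M.exA T := by
  rintro x ⟨hx, hxT⟩
  obtain ⟨hxE, C, hC, hCS, hCx⟩ := mem_exA_iff.1 hx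
  exact mem_exA_iff.2 ⟨⟨hxE.1, hxT⟩, C, hC, hCS.trans (insert_subset_insert hST), hCx⟩

lemma IsBase.mem_exA_sdiff_singleton (hB : M.IsBase B) (hx : x ∈ M.exA B)
    (hbx : ¬ (b < x ∧ M.IsBase (insert x (B \ {b})))) : x ∈ M.exA (B \ {b}) := by
  obtain ⟨hxE, C, hC, hCB, hCx⟩ := mem_exA_iff.1 hx
  refine mem_exA_iff.2 ⟨⟨hxE.1, fun h => hxE.2 h.1⟩, C, hC, ?_, hCx⟩
  by_cases hbC : b ∈ C ∧ b ≠ x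
  · exact absurd ⟨(hCx b hbC.1).lt_of_ne hbC.2,
      hB.isBase_exchange_of_isCircuit hxE hC hCB hbC.1 hbC.2⟩ hbx
  · intro f hf
    have := hCB hf
    have := hxE.2
    grind

lemma Indep.insert_exA_subset_exA_exchange (hB : M.Indep B) (hC : M.IsCircuit C)
    (hCB : C ⊆ insert y B) (hbC : b ∈ C) (hCb : ∀ f ∈ C, f ≤ b) (hyb : y < b)
    (hy : y ∉ M.exA B) : insert b (M.exA B) ⊆ M.exA (insert y (B \ {b})) := by
  have hby : b ≠ y := hyb.ne'
  have hbB : b ∈ B := (mem_insert_iff.1 (hCB hbC)).resolve_left hby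
  rintro x (rfl | hx)
  · refine mem_exA_iff.2 ⟨⟨hC.subset_ground hbC, by simp [hby]⟩, C, hC, fun f hf => ?_, hCb⟩
    have := hCB hf
    grind
  obtain ⟨hxE, Cx, hCx, hCxB, hCxx⟩ := mem_exA_iff.1 hx
  have hxy : x ≠ y := by
    rintro rfl
    exact hy hx
  refine mem_exA_iff.2 ⟨⟨hxE.1, by simp [hxy, hxE.2]⟩, ?_⟩
  by_cases hbCx : b ∈ Cx
  · have hbx : b < x := (hCxx b hbCx).lt_of_ne fun hbx => hxE.2 (hbx ▸ hbB)
    have hxCx : x ∈ Cx :=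
      ((subset_insert_iff.1 hCxB).resolve_left fun h => hCx.not_indep (hB.subset h)).1
    have hxC : x ∉ C := fun h => (mem_insert_iff.1 (hCB h)).elim hxy hxE.2
    obtain ⟨C', hC'sub, hC'⟩ := hCx.elimination hC (fun h => hxC (h ▸ hxCx)) b
    refine ⟨C', hC', fun f hf => ?_, fun f hf => ?_⟩
    · obtain ⟨hf | hf, hfb⟩ := hC'sub hf
      · have := hCxB hf
        grind
      · have := hCB hf
        grind
    · obtain ⟨hf | hf, -⟩ := hC'sub hf
      · exact hCxx f hf
      · exact (hCb f hf).trans hbx.le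
  · refine ⟨Cx, hCx, fun f hf => ?_, hCxx⟩
    have := hCxB hf
    have : f ≠ b := fun h => hbCx (h ▸ hf)
    grind

lemma IntRelated.eq_of_isBase {I : Set α} (h : M.IntRelated I B) (hI : M.IsBase I) : I = B := by
  obtain ⟨hB, Y, -, rfl⟩ := h
  exact hI.eq_of_subset_isBase hB sdiff_subset

lemma extIntLE_of_isBase_of_ne {I J : Set α} (hI : M.IsBase I) (hJ : M.IsBase J) (hIJ : I ≠ J)
    (h : (I \ M.inA I) ∪ M.exA I ⊆ (J \ M.inA J) ∪ M.exA J) : M.extIntLE I J :=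
  Or.inr ⟨fun ⟨_, hIB, hJB⟩ => hIJ ((hIB.eq_of_isBase hI).trans (hJB.eq_of_isBase hJ).symm), h⟩

lemma IsBase.le_of_mem_fundCocircuit (hA : M.IsBase A)
    (hmax : ∀ d', d' ≠ a → M.IsBase (insert d' (A \ {a})) → d' ≤ d)
    (hf : x ∈ M.fundCocircuit a A) (hxa : x ≠ a) : x ≤ d :=
  hmax x hxa <| (hA.mem_fundCocircuit_iff_isBase
    ((mem_insert_iff.1 (M.fundCocircuit_subset_insert_compl a A hf)).resolve_left hxa)
    hxa.symm).1 hf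

lemma IsBase.lt_of_mem_inP (hA : M.IsBase A) (ha : a ∈ M.inP A)
    (hmax : ∀ d', d' ≠ a → M.IsBase (insert d' (A \ {a})) → d' ≤ d) : a < d := by
  obtain ⟨f, hfK, haf⟩ : ∃ f ∈ M.fundCocircuit a A, a < f := by
    by_contra! h
    exact ha.2 ⟨ha.1, mem_exA_iff.2 ⟨⟨hA.subset_ground ha.1, fun h => h.2 ha.1⟩, _,
      fundCocircuit_isCocircuit ha.1 hA, M.fundCocircuit_subset_insert_compl a A, h⟩⟩
  exact haf.trans_le (hA.le_of_mem_fundCocircuit hmax hfK haf.ne')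

lemma IsBase.insert_inA_subset_inA_exchange (hA : M.IsBase A) (ha : a ∈ M.inP A) (hda : d ≠ a)
    (hD : M.IsBase (insert d (A \ {a})))
    (hmax : ∀ d', d' ≠ a → M.IsBase (insert d' (A \ {a})) → d' ≤ d) :
    insert d (M.inA A) ⊆ M.inA (insert d (A \ {a})) := by
  have ha_act : a ∉ M✶.exA (M.E \ A) := fun h => ha.2 ⟨ha.1, h⟩
  have had : a < d := hA.lt_of_mem_inP ha hmax
  have hdK : d ∈ M.fundCocircuit a A := (hA.mem_fundCocircuit_iff_isBase
    ⟨hD.subset_ground (mem_insert _ _), hA.notMem_of_isBase_exchange hD ha.1 hda⟩ hda.symm).2 hD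
  have hexA : insert d (M✶.exA (M.E \ A)) ⊆ M✶.exA (M.E \ insert d (A \ {a})) := by
    rw [sdiff_insert_sdiff_singleton (hA.subset_ground ha.1) hda]
    exact hA.compl_isBase_dual.indep.insert_exA_subset_exA_exchange
      (fundCocircuit_isCocircuit ha.1 hA) (M.fundCocircuit_subset_insert_compl a A) hdK
      (fun f hf => (eq_or_ne f a).elim (fun h => h ▸ had.le) (hA.le_of_mem_fundCocircuit hmax hf))
      had ha_act
  rintro x (rfl | ⟨hxA, hx⟩)
  · exact ⟨mem_insert _ _, hexA (mem_insert _ _)⟩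
  · have hxa : x ≠ a := by
      rintro rfl
      exact ha_act hx
    exact ⟨mem_insert_of_mem _ ⟨hxA, hxa⟩, hexA (mem_insert_of_mem _ hx)⟩

lemma IsBase.exA_exchange_subset (hA : M.IsBase A) (ha : a ∈ A) (hda : d ≠ a)
    (hD : M.IsBase (insert d (A \ {a})))
    (hmax : ∀ d', d' ≠ a → M.IsBase (insert d' (A \ {a})) → d' ≤ d) :
    M.exA (insert d (A \ {a})) ⊆ insert a (M.exA A) := by
  intro x hx
  obtain rfl | hxa := eq_or_ne x a
  · exact mem_insert _ _
  have hxA : x ∉ A := fun h => (mem_exA_iff.1 hx).1.2 (mem_insert_of_mem _ ⟨h, hxa⟩)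
  have hDd : insert d (A \ {a}) \ {d} = A \ {a} :=
    insert_sdiff_self_of_notMem fun h => hA.notMem_of_isBase_exchange hD ha hda h.1
  have hx' : x ∈ M.exA (A \ {a}) := hDd ▸ hD.mem_exA_sdiff_singleton hx
    fun ⟨hdx, hxD⟩ => (hmax x hxa (hDd ▸ hxD)).not_gt hdx
  exact mem_insert_of_mem _ (exA_sdiff_subset sdiff_subset ⟨hx', hxA⟩)

end LinearOrder

end Matroid

theorem max_exchange_lt_general [LinearOrder α] (M : Matroid α)
    (A : Set α) (hA : M.IsBase A) (a : α) (ha : a ∈ M.inP A)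
    (d : α) (hda : d ≠ a) (hD : M.IsBase (insert d (A \ {a})))
    (hmax : ∀ d', d' ≠ a → M.IsBase (insert d' (A \ {a})) → d' ≤ d) :
    M.extIntLE (insert d (A \ {a})) A ∧ insert d (A \ {a}) ≠ A ∧
      M.inA A ⊆ M.inA (insert d (A \ {a})) := by
  have hinA := hA.insert_inA_subset_inA_exchange ha hda hD hmax
  have hexA := hA.exA_exchange_subset ha.1 hda hD hmax
  have hDA : insert d (A \ {a}) ≠ A := fun h =>
    hA.notMem_of_isBase_exchange hD ha.1 hda (h ▸ mem_insert d (A \ {a}))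
  refine ⟨Matroid.extIntLE_of_isBase_of_ne hD hA hDA ?_, hDA, (subset_insert _ _).trans hinA⟩
  rintro x (⟨hxD, hx⟩ | hx)
  · obtain rfl | hxA := mem_insert_iff.1 hxD
    · exact absurd (hinA (mem_insert _ _)) hx
    · exact Or.inl ⟨hxA.1, fun h => hx (hinA (mem_insert_of_mem _ h))⟩
  · obtain rfl | hx := hexA hx
    · exact Or.inl ha
    · exact Or.inr hx

/-- Let `a ∈ IP(A)` and let `d` be the maximum element such that `D = (A \ {a}) ∪ {d}`
is a basis with `d ≠ a`. Then `D <_{ext/int} A` and `IA(A) ⊆ IA(D)`. -/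
theorem max_exchange_lt [LinearOrder α] (M : Matroid α) [M.Finite]
    (A : Set α) (hA : M.IsBase A) (a : α) (ha : a ∈ M.inP A)
    (d : α) (hda : d ≠ a) (hD : M.IsBase (insert d (A \ {a})))
    (hmax : ∀ d', d' ≠ a → M.IsBase (insert d' (A \ {a})) → d' ≤ d) :
    M.extIntLE (insert d (A \ {a})) A ∧ insert d (A \ {a}) ≠ A ∧
      M.inA A ⊆ M.inA (insert d (A \ {a})) :=
  max_exchange_lt_general M A hA a ha d hda hD hmax
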